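/- arXiv:2511.01538 — 2 statements merged into one kernel-verified Lean document; each statement's English description precedes it below -/
import Mathlib

section
/- Let P and Z be real symmetric n×n matrices such that R(P) and R(P+Z) are invertible. Then (K(P+Z) − K(P))^T R(P+Z) (K(P+Z) − K(P)) = N(P,Z)^T R(P+Z)^{-1} N(P,Z). -/
open Matrix BigOperators

noncomputable section

/-- Mean-square stability of the tuple `(F, G_1, …, G_r)` via the Lyapunov characterization. -/
def MSStable {n r : ℕ} (F : Matrix (Fin n) (Fin n) ℝ)
    (G : Fin r → Matrix (Fin n) (Fin n) ℝ) : Prop :=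
  ∃ X : Matrix (Fin n) (Fin n) ℝ, X.PosDef ∧
    (-(X * F + Fᵀ * X + ∑ l, (G l)ᵀ * X * G l)).PosDef

/-- Stochastic detectability of the system `[E_0, …, E_r; F, G_1, …, G_r]`. -/
def StochDetectable {n q r : ℕ} (E0 : Matrix (Fin q) (Fin n) ℝ)
    (E : Fin r → Matrix (Fin q) (Fin n) ℝ)
    (F : Matrix (Fin n) (Fin n) ℝ) (G : Fin r → Matrix (Fin n) (Fin n) ℝ) : Prop :=
  ∃ Θ : Matrix (Fin n) (Fin q) ℝ, MSStable (F + Θ * E0) (fun l => G l + Θ * E l)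

/-- The data of the zero-sum linear-quadratic stochastic differential game. -/
structure GameData (n m1 m2 r : ℕ) where
  A : Matrix (Fin n) (Fin n) ℝ
  C : Fin r → Matrix (Fin n) (Fin n) ℝ
  B1 : Matrix (Fin n) (Fin m1) ℝ
  B2 : Matrix (Fin n) (Fin m2) ℝ
  D1 : Fin r → Matrix (Fin n) (Fin m1) ℝ
  D2 : Fin r → Matrix (Fin n) (Fin m2) ℝ
  Q : Matrix (Fin n) (Fin n) ℝ
  hQ : Q.IsSymm
  S1 : Matrix (Fin m1) (Fin n) ℝ
  S2 : Matrix (Fin m2) (Fin n) ℝ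
  R11 : Matrix (Fin m1) (Fin m1) ℝ
  R22 : Matrix (Fin m2) (Fin m2) ℝ
  R12 : Matrix (Fin m1) (Fin m2) ℝ
  hR11 : R11.IsSymm
  hR22 : R22.IsSymm

namespace GameData

variable {n m1 m2 r : ℕ} (g : GameData n m1 m2 r)

/-- The stacked weighting matrix `S = [S_1; S_2]`. -/
def Sw : Matrix (Fin m1 ⊕ Fin m2) (Fin n) ℝ := fromRows g.S1 g.S2

/-- The full weighting matrix `R = [[R_11, R_12],[R_21, R_22]]` with `R_21 = R_12ᵀ`. -/
def Rw : Matrix (Fin m1 ⊕ Fin m2) (Fin m1 ⊕ Fin m2) ℝ :=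
  fromBlocks g.R11 g.R12 g.R12ᵀ g.R22

/-- `S_1(P) = B_1ᵀ P + Σ_l D_{l,1}ᵀ P C_l + S_1`. -/
def S1P (P : Matrix (Fin n) (Fin n) ℝ) : Matrix (Fin m1) (Fin n) ℝ :=
  g.B1ᵀ * P + ∑ l, (g.D1 l)ᵀ * P * g.C l + g.S1

/-- `S_2(P) = B_2ᵀ P + Σ_l D_{l,2}ᵀ P C_l + S_2`. -/
def S2P (P : Matrix (Fin n) (Fin n) ℝ) : Matrix (Fin m2) (Fin n) ℝ :=
  g.B2ᵀ * P + ∑ l, (g.D2 l)ᵀ * P * g.C l + g.S2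

/-- `S(P) = [S_1(P); S_2(P)]`. -/
def SP (P : Matrix (Fin n) (Fin n) ℝ) : Matrix (Fin m1 ⊕ Fin m2) (Fin n) ℝ :=
  fromRows (g.S1P P) (g.S2P P)

/-- `R_11(P)`. -/
def R11P (P : Matrix (Fin n) (Fin n) ℝ) : Matrix (Fin m1) (Fin m1) ℝ :=
  g.R11 + ∑ l, (g.D1 l)ᵀ * P * g.D1 l

/-- `R_12(P)`. -/
def R12P (P : Matrix (Fin n) (Fin n) ℝ) : Matrix (Fin m1) (Fin m2) ℝ :=
  g.R12 + ∑ l, (g.D1 l)ᵀ * P * g.D2 l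

/-- `R_21(P)`. -/
def R21P (P : Matrix (Fin n) (Fin n) ℝ) : Matrix (Fin m2) (Fin m1) ℝ :=
  g.R12ᵀ + ∑ l, (g.D2 l)ᵀ * P * g.D1 l

/-- `R_22(P)`. -/
def R22P (P : Matrix (Fin n) (Fin n) ℝ) : Matrix (Fin m2) (Fin m2) ℝ :=
  g.R22 + ∑ l, (g.D2 l)ᵀ * P * g.D2 l

/-- `R(P)` assembled from its blocks. -/
def RP (P : Matrix (Fin n) (Fin n) ℝ) : Matrix (Fin m1 ⊕ Fin m2) (Fin m1 ⊕ Fin m2) ℝ :=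
  fromBlocks (g.R11P P) (g.R12P P) (g.R21P P) (g.R22P P)

/-- `K(P) = −R(P)⁻¹ S(P)` (stacked feedback gain). -/
def KP (P : Matrix (Fin n) (Fin n) ℝ) : Matrix (Fin m1 ⊕ Fin m2) (Fin n) ℝ :=
  -((g.RP P)⁻¹ * g.SP P)

/-- `K_1(P)`: the first block of `K(P)`. -/
def K1 (P : Matrix (Fin n) (Fin n) ℝ) : Matrix (Fin m1) (Fin n) ℝ :=
  (g.KP P).submatrix Sum.inl id

/-- `K_2(P)`: the second block of `K(P)`. -/
def K2 (P : Matrix (Fin n) (Fin n) ℝ) : Matrix (Fin m2) (Fin n) ℝ :=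
  (g.KP P).submatrix Sum.inr id

/-- `G(P) = PA + AᵀP + Σ_l C_lᵀ P C_l + Q − S(P)ᵀ R(P)⁻¹ S(P)`. -/
def GP (P : Matrix (Fin n) (Fin n) ℝ) : Matrix (Fin n) (Fin n) ℝ :=
  P * g.A + g.Aᵀ * P + ∑ l, (g.C l)ᵀ * P * g.C l + g.Q
    - (g.SP P)ᵀ * (g.RP P)⁻¹ * g.SP P

/-- `A_{K(P)} = A + B_1 K_1(P) + B_2 K_2(P)`. -/
def AK (P : Matrix (Fin n) (Fin n) ℝ) : Matrix (Fin n) (Fin n) ℝ :=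
  g.A + g.B1 * g.K1 P + g.B2 * g.K2 P

/-- `C_{l,K(P)} = C_l + D_{l,1} K_1(P) + D_{l,2} K_2(P)`. -/
def CK (P : Matrix (Fin n) (Fin n) ℝ) (l : Fin r) : Matrix (Fin n) (Fin n) ℝ :=
  g.C l + g.D1 l * g.K1 P + g.D2 l * g.K2 P

/-- `N_1(P,Z)`. -/
def N1 (P Z : Matrix (Fin n) (Fin n) ℝ) : Matrix (Fin m1) (Fin n) ℝ :=
  g.B1ᵀ * Z + ∑ l, (g.D1 l)ᵀ * Z * g.CK P l

/-- `N_2(P,Z)`. -/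
def N2 (P Z : Matrix (Fin n) (Fin n) ℝ) : Matrix (Fin m2) (Fin n) ℝ :=
  g.B2ᵀ * Z + ∑ l, (g.D2 l)ᵀ * Z * g.CK P l

/-- `N(P,Z) = [N_1(P,Z); N_2(P,Z)]`. -/
def NP (P Z : Matrix (Fin n) (Fin n) ℝ) : Matrix (Fin m1 ⊕ Fin m2) (Fin n) ℝ :=
  fromRows (g.N1 P Z) (g.N2 P Z)

/-- Membership in `Dom G`: `R_22(P) ≻ 0` and `R_11(P) ≺ 0`. -/
def MemDomG (P : Matrix (Fin n) (Fin n) ℝ) : Prop :=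
  (g.R22P P).PosDef ∧ (-(g.R11P P)).PosDef

/-- `Z` satisfies the inner Riccati equation at `P`. -/
def InnerRiccati (P Z : Matrix (Fin n) (Fin n) ℝ) : Prop :=
  g.GP P + Z * g.AK P + (g.AK P)ᵀ * Z + ∑ l, (g.CK P l)ᵀ * Z * g.CK P l
    - (g.N2 P Z)ᵀ * (g.R22P (P + Z))⁻¹ * g.N2 P Z = 0

/-- `A_L = A + B_1 K_1(0) + B_2 K_2(0) + B_2 L`. -/
def AL (L : Matrix (Fin m2) (Fin n) ℝ) : Matrix (Fin n) (Fin n) ℝ :=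
  g.A + g.B1 * g.K1 0 + g.B2 * g.K2 0 + g.B2 * L

/-- `C_{lL} = C_l + D_{l,1} K_1(0) + D_{l,2} K_2(0) + D_{l,2} L`. -/
def CL (L : Matrix (Fin m2) (Fin n) ℝ) (l : Fin r) : Matrix (Fin n) (Fin n) ℝ :=
  g.C l + g.D1 l * g.K1 0 + g.D2 l * g.K2 0 + g.D2 l * L

/-- `Q_L = Q − S(0)ᵀ R(0)⁻¹ S(0) + Lᵀ R_22 L`. -/
def QL (L : Matrix (Fin m2) (Fin n) ℝ) : Matrix (Fin n) (Fin n) ℝ :=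
  g.Q - (g.SP 0)ᵀ * (g.RP 0)⁻¹ * g.SP 0 + Lᵀ * g.R22 * L

/-- `S_L = R_12 L`. -/
def SL (L : Matrix (Fin m2) (Fin n) ℝ) : Matrix (Fin m1) (Fin n) ℝ := g.R12 * L

/-- The linear term `B_1ᵀ P + Σ_l D_{l,1}ᵀ P C_{lL} + S_L` in the `L`-Riccati equation. -/
def S1L (L : Matrix (Fin m2) (Fin n) ℝ) (P : Matrix (Fin n) (Fin n) ℝ) :
    Matrix (Fin m1) (Fin n) ℝ :=
  g.B1ᵀ * P + ∑ l, (g.D1 l)ᵀ * P * g.CL L l + g.SL L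

/-- Left-hand side of the algebraic Riccati equation associated with `L`. -/
def AREL (L : Matrix (Fin m2) (Fin n) ℝ) (P : Matrix (Fin n) (Fin n) ℝ) :
    Matrix (Fin n) (Fin n) ℝ :=
  P * g.AL L + (g.AL L)ᵀ * P + ∑ l, (g.CL L l)ᵀ * P * g.CL L l + g.QL L
    - (g.S1L L P)ᵀ * (g.R11P P)⁻¹ * g.S1L L P

/-- `K_L(P) = −(R_11 + Σ_l D_{l,1}ᵀ P D_{l,1})⁻¹ (B_1ᵀ P + Σ_l D_{l,1}ᵀ P C_{lL} + S_L)`. -/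
def KL (L : Matrix (Fin m2) (Fin n) ℝ) (P : Matrix (Fin n) (Fin n) ℝ) :
    Matrix (Fin m1) (Fin n) ℝ :=
  -((g.R11P P)⁻¹ * g.S1L L P)

/-- `P̃` is a stabilizing solution of the `L`-Riccati equation. -/
def IsStabSolL (L : Matrix (Fin m2) (Fin n) ℝ) (P : Matrix (Fin n) (Fin n) ℝ) : Prop :=
  P.IsSymm ∧ g.AREL L P = 0 ∧ (-(g.R11P P)).PosDef ∧
    MSStable (g.AL L + g.B1 * g.KL L P) (fun l => g.CL L l + g.D1 l * g.KL L P)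

/-- `L ∈ 𝒜`. -/
def MemA (L : Matrix (Fin m2) (Fin n) ℝ) : Prop :=
  MSStable (g.AL L) (g.CL L) ∧ ∃ P, g.IsStabSolL L P

end GameData

/-!
Stack the controls: with `B = [B_1 B_2]` and `D_l = [D_{l,1} D_{l,2}]`, both `S(P)` and `R(P)` are
affine in `P`, and `R(P) K(P) = -S(P)`. Hence `S(P+Z) + R(P+Z) K(P) = N(P,Z)`, i.e.
`K(P+Z) - K(P) = -R(P+Z)⁻¹ N(P,Z)`, and the identity follows from the symmetry of `R(P+Z)`.
-/

namespace Matrix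

variable {α ι m m₁ m₂ n₁ n₂ n : Type*}

lemma fromRows_add [Add α] (A₁ B₁ : Matrix m₁ n α) (A₂ B₂ : Matrix m₂ n α) :
    fromRows (A₁ + B₁) (A₂ + B₂) = fromRows A₁ A₂ + fromRows B₁ B₂ := by
  ext (i | i) j <;> rfl

lemma fromRows_sum [AddCommMonoid α] (s : Finset ι) (A₁ : ι → Matrix m₁ n α)
    (A₂ : ι → Matrix m₂ n α) :
    fromRows (∑ i ∈ s, A₁ i) (∑ i ∈ s, A₂ i) = ∑ i ∈ s, fromRows (A₁ i) (A₂ i) := by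
  ext (i | i) j <;> simp [Matrix.sum_apply]

lemma fromBlocks_sum [AddCommMonoid α] (s : Finset ι) (A : ι → Matrix n₁ m₁ α)
    (B : ι → Matrix n₁ m₂ α) (C : ι → Matrix n₂ m₁ α) (D : ι → Matrix n₂ m₂ α) :
    fromBlocks (∑ i ∈ s, A i) (∑ i ∈ s, B i) (∑ i ∈ s, C i) (∑ i ∈ s, D i)
      = ∑ i ∈ s, fromBlocks (A i) (B i) (C i) (D i) := by
  ext (i | i) (j | j) <;> simp [Matrix.sum_apply]

lemma IsSymm.transpose_inv_mul_mul_inv_mul [CommRing α] [Fintype m] [DecidableEq m]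
    {R : Matrix m m α} (hR : R.IsSymm) (hdet : IsUnit R.det) (N : Matrix m n α) :
    (R⁻¹ * N)ᵀ * R * (R⁻¹ * N) = Nᵀ * R⁻¹ * N := by
  rw [transpose_mul, transpose_nonsing_inv, hR.eq, Matrix.mul_assoc, Matrix.mul_assoc,
    ← Matrix.mul_assoc R, mul_nonsing_inv _ hdet, Matrix.one_mul, Matrix.mul_assoc]

end Matrix

namespace GameData

variable {n m1 m2 r : ℕ} (g : GameData n m1 m2 r)

def Bw : Matrix (Fin n) (Fin m1 ⊕ Fin m2) ℝ := fromCols g.B1 g.B2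

def Dw (l : Fin r) : Matrix (Fin n) (Fin m1 ⊕ Fin m2) ℝ := fromCols (g.D1 l) (g.D2 l)

lemma SP_eq_stacked (P : Matrix (Fin n) (Fin n) ℝ) :
    g.SP P = g.Bwᵀ * P + ∑ l, (g.Dw l)ᵀ * P * g.C l + g.Sw := by
  simp only [SP, S1P, S2P, Sw, Bw, Dw, transpose_fromCols, fromRows_mul, ← fromRows_sum,
    ← fromRows_add]

lemma RP_eq_stacked (P : Matrix (Fin n) (Fin n) ℝ) :
    g.RP P = g.Rw + ∑ l, (g.Dw l)ᵀ * P * g.Dw l := by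
  simp only [RP, R11P, R12P, R21P, R22P, Rw, Dw, transpose_fromCols, fromRows_mul, mul_fromCols,
    fromCols_fromRows_eq_fromBlocks, ← fromBlocks_sum, fromBlocks_add]

lemma NP_eq_stacked (P Z : Matrix (Fin n) (Fin n) ℝ) :
    g.NP P Z = g.Bwᵀ * Z + ∑ l, (g.Dw l)ᵀ * Z * g.CK P l := by
  simp only [NP, N1, N2, Bw, Dw, transpose_fromCols, fromRows_mul, ← fromRows_sum,
    ← fromRows_add]

lemma CK_eq_stacked (P : Matrix (Fin n) (Fin n) ℝ) (l : Fin r) :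
    g.CK P l = g.C l + g.Dw l * g.KP P := by
  have hK : g.KP P = fromRows (g.K1 P) (g.K2 P) := by
    ext (i | i) j <;> rfl
  rw [CK, hK, Dw, fromCols_mul_fromRows, add_assoc]

lemma SP_add (P Z : Matrix (Fin n) (Fin n) ℝ) :
    g.SP (P + Z) = g.SP P + (g.Bwᵀ * Z + ∑ l, (g.Dw l)ᵀ * Z * g.C l) := by
  simp only [SP_eq_stacked, Matrix.mul_add, Matrix.add_mul, Finset.sum_add_distrib]
  abel

lemma RP_add (P Z : Matrix (Fin n) (Fin n) ℝ) :
    g.RP (P + Z) = g.RP P + ∑ l, (g.Dw l)ᵀ * Z * g.Dw l := by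
  simp only [RP_eq_stacked, Matrix.mul_add, Matrix.add_mul, Finset.sum_add_distrib]
  abel

lemma Rw_isSymm : g.Rw.IsSymm := by
  simp [IsSymm, Rw, fromBlocks_transpose, g.hR11.eq, g.hR22.eq]

lemma RP_isSymm {P : Matrix (Fin n) (Fin n) ℝ} (hP : P.IsSymm) : (g.RP P).IsSymm := by
  rw [RP_eq_stacked]
  refine g.Rw_isSymm.add ?_
  simp only [IsSymm, transpose_sum, transpose_mul, transpose_transpose, hP.eq, Matrix.mul_assoc]

lemma RP_mul_KP {P : Matrix (Fin n) (Fin n) ℝ} (hRP : IsUnit (g.RP P).det) :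
    g.RP P * g.KP P = -g.SP P := by
  rw [KP, Matrix.mul_neg, ← Matrix.mul_assoc, mul_nonsing_inv _ hRP, Matrix.one_mul]

lemma SP_add_add_RP_add_mul_KP {P : Matrix (Fin n) (Fin n) ℝ} (Z : Matrix (Fin n) (Fin n) ℝ)
    (hRP : IsUnit (g.RP P).det) :
    g.SP (P + Z) + g.RP (P + Z) * g.KP P = g.NP P Z := by
  rw [SP_add, RP_add, Matrix.add_mul, g.RP_mul_KP hRP, NP_eq_stacked, Matrix.sum_mul]
  simp only [CK_eq_stacked, Matrix.mul_add, Finset.sum_add_distrib, Matrix.mul_assoc]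
  abel

lemma KP_add_sub_KP {P Z : Matrix (Fin n) (Fin n) ℝ} (hRP : IsUnit (g.RP P).det)
    (hRPZ : IsUnit (g.RP (P + Z)).det) :
    g.KP (P + Z) - g.KP P = -((g.RP (P + Z))⁻¹ * g.NP P Z) := by
  rw [← g.SP_add_add_RP_add_mul_KP Z hRP, Matrix.mul_add, ← Matrix.mul_assoc,
    nonsing_inv_mul _ hRPZ, Matrix.one_mul, KP]
  abel

end GameData

/-- the quadratic form of the gain increment equals `N(P,Z)ᵀ R(P+Z)⁻¹ N(P,Z)`. -/
theorem statement3 {n m1 m2 r : ℕ} (g : GameData n m1 m2 r)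
    (P Z : Matrix (Fin n) (Fin n) ℝ) (hP : P.IsSymm) (hZ : Z.IsSymm)
    (hRP : IsUnit (g.RP P).det) (hRPZ : IsUnit (g.RP (P + Z)).det) :
    (g.KP (P + Z) - g.KP P)ᵀ * g.RP (P + Z) * (g.KP (P + Z) - g.KP P)
      = (g.NP P Z)ᵀ * (g.RP (P + Z))⁻¹ * g.NP P Z := by
  rw [g.KP_add_sub_KP hRP hRPZ, transpose_neg, Matrix.neg_mul, Matrix.neg_mul, Matrix.mul_neg,
    neg_neg]
  exact (g.RP_isSymm (hP.add hZ)).transpose_inv_mul_mul_inv_mul hRPZ _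
end
end

section
/- Assume 0 ∈ Dom G. Let L ∈ 𝒜 with associated stabilizing solution P̃_L, and let P, Z be real symmetric n×n matrices such that P ∈ Dom G, P + Z ∈ Dom G, and Z satisfies the inner Riccati equation at P. If the tuple (A + B_1 K_1(P) + B_2 K_2(0) + B_2 L, C_1 + D_{1,1} K_1(P) + D_{1,2} K_2(0) + D_{1,2} L, …, C_r + D_{r,1} K_1(P) + D_{r,2} K_2(0) + D_{r,2} L) is mean-square stable, then P̃_L ⪰ P + Z. -/
open Matrix BigOperators

noncomputable section

/-!
For gains `F = (F1, F2)` let `H(Y, F)` be the Hamiltonian of the game: the Lyapunov operator `𝓛_F`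
of the closed loop applied to `Y`, plus the running cost of `F`; it is affine in `Y` with linear
part `𝓛_F`. Take `F = (K1(P), K2(0) + L)`. Completing the square in `F2`, the inner Riccati equation
turns `H(P + Z, K1(P), ·)` into a square weighted by `R22(P + Z) ≻ 0`, so `H(P + Z, F) ⪰ 0`.
Completing the square in `F1`, the Riccati equation of `L` turns `H(P̃, ·, K2(0) + L)` into a square
weighted by `R11(P̃) ≺ 0`, so `H(P̃, F) ⪯ 0`. Hence
`𝓛_F(P̃ - (P + Z)) = H(P̃, F) - H(P + Z, F) ⪯ 0`, and Lyapunov's theorem for the mean-square stable closed loop gives `P̃ - (P + Z) ⪰ 0`.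
-/

section Rayleigh

variable {ι : Type*} [Fintype ι]

/-- The minimum `μ` of the generalized Rayleigh quotient `vᵀYv / vᵀXv`, attained on the compact
unit sphere, makes `Y - μX` positive semidefinite and singular. -/
lemma exists_posSemidef_sub_smul_mulVec_eq_zero [Nonempty ι] {X Y : Matrix ι ι ℝ}
    (hX : X.PosDef) (hY : Y.IsHermitian) :
    ∃ μ : ℝ, ∃ v : ι → ℝ, v ≠ 0 ∧ (Y - μ • X).PosSemidef ∧ (Y - μ • X) *ᵥ v = 0 := by
  have hXpos : ∀ v : ι → ℝ, v ≠ 0 → 0 < v ⬝ᵥ X *ᵥ v := by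
    simpa using fun v => hX.dotProduct_mulVec_pos (x := v)
  let f : (ι → ℝ) → ℝ := fun v => (v ⬝ᵥ Y *ᵥ v) / (v ⬝ᵥ X *ᵥ v)
  have hf : ContinuousOn f (Metric.sphere 0 1) := by
    refine ContinuousOn.div (by fun_prop) (by fun_prop) fun v hv => (hXpos v ?_).ne'
    exact ne_zero_of_mem_unit_sphere ⟨v, hv⟩
  obtain ⟨v₀, hv₀, hmin⟩ := (isCompact_sphere (0 : ι → ℝ) 1).exists_isMinOn
    (NormedSpace.sphere_nonempty.2 zero_le_one) hf
  have hv₀ne : v₀ ≠ 0 := ne_zero_of_mem_unit_sphere ⟨v₀, hv₀⟩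
  have hle (v : ι → ℝ) : f v₀ * (v ⬝ᵥ X *ᵥ v) ≤ v ⬝ᵥ Y *ᵥ v := by
    rcases eq_or_ne v 0 with rfl | hv
    · simp
    have hscale : f (‖v‖⁻¹ • v) = f v := by
      have : ‖v‖⁻¹ ≠ 0 := by simpa using hv
      simp only [f, mulVec_smul, dotProduct_smul, smul_dotProduct, smul_eq_mul]
      field_simp
    have hsphere : ‖v‖⁻¹ • v ∈ Metric.sphere (0 : ι → ℝ) 1 := by
      simp [norm_smul, hv]
    rw [← le_div_iff₀ (hXpos v hv)]
    exact (hmin hsphere).trans_eq hscale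
  have hW : (Y - f v₀ • X).PosSemidef := by
    refine .of_dotProduct_mulVec_nonneg (hY.sub (hX.isHermitian.smul (.all _))) fun v => ?_
    simpa [sub_mulVec, smul_mulVec] using hle v
  refine ⟨f v₀, v₀, hv₀ne, hW, (hW.dotProduct_mulVec_zero_iff v₀).1 ?_⟩
  simp [f, sub_mulVec, smul_mulVec, div_mul_cancel₀ _ (hXpos v₀ hv₀ne).ne']

end Rayleigh

section Lyapunov

variable {ι : Type*} [Fintype ι] {r : ℕ}

def lyapOp (F : Matrix ι ι ℝ) (G : Fin r → Matrix ι ι ℝ) (X : Matrix ι ι ℝ) : Matrix ι ι ℝ :=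
  X * F + Fᵀ * X + ∑ l, (G l)ᵀ * X * G l

variable (F : Matrix ι ι ℝ) (G : Fin r → Matrix ι ι ℝ)

@[simp]
lemma lyapOp_zero : lyapOp F G 0 = 0 := by
  simp [lyapOp]

lemma lyapOp_sub (X Y : Matrix ι ι ℝ) : lyapOp F G (X - Y) = lyapOp F G X - lyapOp F G Y := by
  simp only [lyapOp, Matrix.sub_mul, Matrix.mul_sub, Finset.sum_sub_distrib]
  abel

lemma lyapOp_smul (c : ℝ) (X : Matrix ι ι ℝ) : lyapOp F G (c • X) = c • lyapOp F G X := by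
  simp only [lyapOp, Matrix.smul_mul, Matrix.mul_smul, ← Finset.smul_sum, smul_add]

/-- On the kernel of a positive semidefinite `W`, only the diffusion terms of `lyapOp W` survive. -/
lemma dotProduct_lyapOp_mulVec_nonneg {W : Matrix ι ι ℝ} (hW : W.PosSemidef) {v : ι → ℝ}
    (hv : W *ᵥ v = 0) : 0 ≤ v ⬝ᵥ lyapOp F G W *ᵥ v := by
  have hWt : Wᵀ = W := hW.isHermitian
  have hdrift : v ⬝ᵥ (W * F + Fᵀ * W) *ᵥ v = 0 := by
    rw [add_mulVec, ← mulVec_mulVec, ← mulVec_mulVec, dotProduct_add, dotProduct_mulVec v W,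
      ← mulVec_transpose, hWt, hv]
    simp
  have hdiff (l : Fin r) : v ⬝ᵥ ((G l)ᵀ * W * G l) *ᵥ v = (G l *ᵥ v) ⬝ᵥ W *ᵥ (G l *ᵥ v) := by
    rw [← mulVec_mulVec, ← mulVec_mulVec, dotProduct_mulVec v, ← mulVec_transpose,
      transpose_transpose]
  rw [lyapOp, add_mulVec, dotProduct_add, hdrift, zero_add, sum_mulVec, dotProduct_sum]
  refine Finset.sum_nonneg fun l _ => ?_
  simpa [hdiff l] using hW.dotProduct_mulVec_nonneg (G l *ᵥ v)

end Lyapunov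

/-- If `Y` were not positive semidefinite, the minimum `μ` of its Rayleigh quotient against the
Lyapunov certificate `X` would be negative, so that `-𝓛(Y - μX) = -𝓛(Y) - μ(-𝓛(X)) ≻ 0`, which
fails at a kernel vector of `Y - μX`. -/
theorem posSemidef_of_msStable {k r : ℕ} {F : Matrix (Fin k) (Fin k) ℝ}
    {G : Fin r → Matrix (Fin k) (Fin k) ℝ} (hs : MSStable F G) {Y : Matrix (Fin k) (Fin k) ℝ}
    (hY : Y.IsHermitian) (hLY : (-lyapOp F G Y).PosSemidef) : Y.PosSemidef := by
  obtain ⟨X, hX, hLX⟩ := hs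
  cases isEmpty_or_nonempty (Fin k)
  · exact Subsingleton.elim Y 0 ▸ .zero
  obtain ⟨μ, v, hv, hW, hWv⟩ := exists_posSemidef_sub_smul_mulVec_eq_zero hX hY
  have hμ : 0 ≤ μ := by
    by_contra! hμ
    have hpos : (-lyapOp F G (Y - μ • X)).PosDef := by
      have : -lyapOp F G (Y - μ • X) = -lyapOp F G Y + (-μ) • -lyapOp F G X := by
        rw [lyapOp_sub, lyapOp_smul]; module
      exact this ▸ PosDef.posSemidef_add hLY (hLX.smul (neg_pos.2 hμ))
    have := hpos.dotProduct_mulVec_pos hv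
    have := dotProduct_lyapOp_mulVec_nonneg F G hW hWv
    simp only [neg_mulVec, dotProduct_neg, star_trivial] at *
    linarith
  simpa using hW.add (hX.posSemidef.smul hμ)

section CompleteSquare

variable {ι κ : Type*} [Fintype κ] [DecidableEq κ] {R : Matrix κ κ ℝ}

lemma quadratic_eq_sub_add_sq (hR : R.IsSymm) (hu : IsUnit R.det) (c : Matrix ι ι ℝ)
    (S F : Matrix κ ι ℝ) :
    c + Fᵀ * S + Sᵀ * F + Fᵀ * R * F
      = c - Sᵀ * R⁻¹ * S + (F + R⁻¹ * S)ᵀ * R * (F + R⁻¹ * S) := by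
  have hRinv : R⁻¹ᵀ = R⁻¹ := by rw [transpose_nonsing_inv, hR.eq]
  simp only [transpose_add, transpose_mul, hRinv, Matrix.add_mul, Matrix.mul_add, Matrix.mul_assoc,
    mul_nonsing_inv_cancel_left _ _ hu, nonsing_inv_mul_cancel_left _ _ hu]
  abel

/-- `(S + RF₀)ᵀR⁻¹(S + RF₀)` is the value of the square `(F + R⁻¹S)ᵀR(F + R⁻¹S)` at `F₀`. -/
lemma quadratic_eq_sq_of_eq_at (hR : R.IsSymm) (hu : IsUnit R.det)
    {q : Matrix κ ι ℝ → Matrix ι ι ℝ} {c : Matrix ι ι ℝ} {S : Matrix κ ι ℝ}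
    (hq : ∀ F, q F = c + Fᵀ * S + Sᵀ * F + Fᵀ * R * F) {F₀ : Matrix κ ι ℝ}
    (h₀ : q F₀ = (S + R * F₀)ᵀ * R⁻¹ * (S + R * F₀)) (F : Matrix κ ι ℝ) :
    q F = (F + R⁻¹ * S)ᵀ * R * (F + R⁻¹ * S) := by
  have hRinv : R⁻¹ᵀ = R⁻¹ := by rw [transpose_nonsing_inv, hR.eq]
  have hsq : (F₀ + R⁻¹ * S)ᵀ * R * (F₀ + R⁻¹ * S) = (S + R * F₀)ᵀ * R⁻¹ * (S + R * F₀) := by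
    rw [show F₀ + R⁻¹ * S = R⁻¹ * (S + R * F₀) by
      rw [Matrix.mul_add, nonsing_inv_mul_cancel_left _ _ hu, add_comm]]
    rw [transpose_mul, hRinv, Matrix.mul_assoc, Matrix.mul_assoc,
      mul_nonsing_inv_cancel_left _ _ hu, Matrix.mul_assoc]
  have hc : c = Sᵀ * R⁻¹ * S := by
    have h := quadratic_eq_sub_add_sq hR hu c S F₀
    rw [← hq, h₀, hsq] at h
    simpa [sub_eq_zero] using h
  rw [hq, quadratic_eq_sub_add_sq hR hu, hc, sub_self, zero_add]

end CompleteSquare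

lemma isUnit_det_fromBlocks_of_negDef_posDef {ι κ : Type*} [Fintype ι] [Fintype κ]
    [DecidableEq ι] [DecidableEq κ] {A : Matrix ι ι ℝ} {B : Matrix ι κ ℝ} {D : Matrix κ κ ℝ}
    (hA : (-A).PosDef) (hD : D.PosDef) : IsUnit (fromBlocks A B Bᵀ D).det := by
  let _ := hD.isUnit.invertible
  have hSchur : (-(A - B * D⁻¹ * Bᵀ)).PosDef := by
    rw [neg_sub', sub_neg_eq_add]
    simpa using hA.add_posSemidef (hD.inv.posSemidef.mul_mul_conjTranspose_same B)
  have hSchur' : IsUnit (A - B * D⁻¹ * Bᵀ) := by simpa using hSchur.isUnit.neg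
  rw [det_fromBlocks₂₂, invOf_eq_nonsing_inv]
  exact ((isUnit_iff_isUnit_det D).mp hD.isUnit).mul ((isUnit_iff_isUnit_det _).mp hSchur')

lemma Matrix.PosSemidef.transpose_mul_mul_same {ι κ : Type*} [Fintype ι] [Fintype κ]
    {A : Matrix κ κ ℝ} (hA : A.PosSemidef) (B : Matrix κ ι ℝ) : (Bᵀ * A * B).PosSemidef := by
  simpa only [conjTranspose_eq_transpose_of_trivial] using hA.conjTranspose_mul_mul_same B

namespace GameData

variable {n m1 m2 r : ℕ} (g : GameData n m1 m2 r)

def closedLoopA (F1 : Matrix (Fin m1) (Fin n) ℝ) (F2 : Matrix (Fin m2) (Fin n) ℝ) :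
    Matrix (Fin n) (Fin n) ℝ :=
  g.A + g.B1 * F1 + g.B2 * F2

def closedLoopC (F1 : Matrix (Fin m1) (Fin n) ℝ) (F2 : Matrix (Fin m2) (Fin n) ℝ) (l : Fin r) :
    Matrix (Fin n) (Fin n) ℝ :=
  g.C l + g.D1 l * F1 + g.D2 l * F2

/-- The weight `[I; F]ᵀ [[Q, Sᵀ], [S, R]] [I; F]` of the running cost under the feedback
`u = (F1 x, F2 x)`. -/
def runningCost (F1 : Matrix (Fin m1) (Fin n) ℝ) (F2 : Matrix (Fin m2) (Fin n) ℝ) :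
    Matrix (Fin n) (Fin n) ℝ :=
  g.Q + F1ᵀ * g.S1 + g.S1ᵀ * F1 + F2ᵀ * g.S2 + g.S2ᵀ * F2
    + F1ᵀ * g.R11 * F1 + F1ᵀ * g.R12 * F2 + F2ᵀ * g.R12ᵀ * F1 + F2ᵀ * g.R22 * F2

def hamiltonian (Y : Matrix (Fin n) (Fin n) ℝ) (F1 : Matrix (Fin m1) (Fin n) ℝ)
    (F2 : Matrix (Fin m2) (Fin n) ℝ) : Matrix (Fin n) (Fin n) ℝ :=
  lyapOp (g.closedLoopA F1 F2) (g.closedLoopC F1 F2) Y + g.runningCost F1 F2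

variable {Y : Matrix (Fin n) (Fin n) ℝ}

lemma R11P_isSymm (hY : Y.IsSymm) : (g.R11P Y).IsSymm := by
  simp [IsSymm, R11P, transpose_sum, Matrix.mul_assoc, hY.eq, g.hR11.eq]

lemma R22P_isSymm (hY : Y.IsSymm) : (g.R22P Y).IsSymm := by
  simp [IsSymm, R22P, transpose_sum, Matrix.mul_assoc, hY.eq, g.hR22.eq]

lemma R21P_eq_transpose (hY : Y.IsSymm) : g.R21P Y = (g.R12P Y)ᵀ := by
  simp [R12P, R21P, transpose_sum, Matrix.mul_assoc, hY.eq]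

lemma RP_isSymm_s10 (hY : Y.IsSymm) : (g.RP Y).IsSymm := by
  rw [IsSymm, RP, fromBlocks_transpose, (g.R11P_isSymm hY).eq, (g.R22P_isSymm hY).eq,
    g.R21P_eq_transpose hY, transpose_transpose]

lemma isUnit_det_RP (hY : Y.IsSymm) (hdom : g.MemDomG Y) : IsUnit (g.RP Y).det := by
  rw [RP, g.R21P_eq_transpose hY]
  exact isUnit_det_fromBlocks_of_negDef_posDef hdom.2 hdom.1

lemma KP_eq_fromRows : g.KP Y = fromRows (g.K1 Y) (g.K2 Y) := by
  ext (i | i) j <;> rfl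

lemma RP_mul_KP_s10 (hu : IsUnit (g.RP Y).det) :
    g.R11P Y * g.K1 Y + g.R12P Y * g.K2 Y = -g.S1P Y ∧
      g.R21P Y * g.K1 Y + g.R22P Y * g.K2 Y = -g.S2P Y := by
  have h : g.RP Y * g.KP Y = -g.SP Y := by
    rw [KP, Matrix.mul_neg, mul_nonsing_inv_cancel_left _ _ hu]
  rwa [KP_eq_fromRows, RP, fromBlocks_mul_fromRows, SP, fromRows_neg, fromRows_ext_iff] at h

lemma S1P_eq_neg (hu : IsUnit (g.RP Y).det) :
    g.S1P Y = -(g.R11P Y * g.K1 Y + g.R12P Y * g.K2 Y) := by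
  rw [(g.RP_mul_KP_s10 hu).1, neg_neg]

lemma S2P_eq_neg (hu : IsUnit (g.RP Y).det) :
    g.S2P Y = -(g.R21P Y * g.K1 Y + g.R22P Y * g.K2 Y) := by
  rw [(g.RP_mul_KP_s10 hu).2, neg_neg]

lemma hamiltonian_eq_blocks (hY : Y.IsSymm) (F1 : Matrix (Fin m1) (Fin n) ℝ)
    (F2 : Matrix (Fin m2) (Fin n) ℝ) :
    g.hamiltonian Y F1 F2 = lyapOp g.A g.C Y + g.Q
      + F1ᵀ * g.S1P Y + (g.S1P Y)ᵀ * F1 + F2ᵀ * g.S2P Y + (g.S2P Y)ᵀ * F2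
      + F1ᵀ * g.R11P Y * F1 + F1ᵀ * g.R12P Y * F2 + F2ᵀ * g.R21P Y * F1
      + F2ᵀ * g.R22P Y * F2 := by
  simp only [hamiltonian, lyapOp, closedLoopA, closedLoopC, runningCost, S1P, S2P, R11P, R12P,
    R21P, R22P, Matrix.add_mul, Matrix.mul_add, transpose_add, transpose_mul, transpose_sum,
    transpose_transpose, Matrix.sum_mul, Matrix.mul_sum, Finset.sum_add_distrib,
    Matrix.mul_assoc, hY.eq]
  abel

lemma hamiltonian_eq_GP_add_sq (hY : Y.IsSymm) (hu : IsUnit (g.RP Y).det)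
    (F1 : Matrix (Fin m1) (Fin n) ℝ) (F2 : Matrix (Fin m2) (Fin n) ℝ) :
    g.hamiltonian Y F1 F2 = g.GP Y
      + (fromRows F1 F2 - g.KP Y)ᵀ * g.RP Y * (fromRows F1 F2 - g.KP Y) := by
  have hstacked : g.hamiltonian Y F1 F2 = lyapOp g.A g.C Y + g.Q
      + (fromRows F1 F2)ᵀ * g.SP Y + (g.SP Y)ᵀ * fromRows F1 F2
      + (fromRows F1 F2)ᵀ * g.RP Y * fromRows F1 F2 := by
    rw [g.hamiltonian_eq_blocks hY]
    simp only [SP, RP, transpose_fromRows, fromCols_mul_fromRows, fromCols_mul_fromBlocks,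
      Matrix.add_mul]
    abel
  rw [hstacked, quadratic_eq_sub_add_sq (g.RP_isSymm_s10 hY) hu, KP, sub_neg_eq_add]
  rfl

lemma hamiltonian_K {P : Matrix (Fin n) (Fin n) ℝ} (hP : P.IsSymm) (hu : IsUnit (g.RP P).det) :
    g.hamiltonian P (g.K1 P) (g.K2 P) = g.GP P := by
  rw [g.hamiltonian_eq_GP_add_sq hP hu, ← KP_eq_fromRows, sub_self]
  simp

lemma hamiltonian_K0_L (hu0 : IsUnit (g.RP 0).det) (L : Matrix (Fin m2) (Fin n) ℝ) :
    g.hamiltonian Y (g.K1 0) (g.K2 0 + L) = lyapOp (g.AL L) (g.CL L) Y + g.QL L := by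
  have hcost : g.runningCost (g.K1 0) (g.K2 0 + L) = g.QL L := by
    have h := g.hamiltonian_eq_GP_add_sq (Y := 0) (by simp [IsSymm]) hu0 (g.K1 0) (g.K2 0 + L)
    have hdev : fromRows (g.K1 0) (g.K2 0 + L) - g.KP 0 = fromRows 0 L := by
      rw [KP_eq_fromRows]
      ext (i | i) j <;> simp
    rw [hamiltonian, lyapOp_zero, zero_add, hdev] at h
    rw [h, QL]
    simp [GP, RP, R22P, transpose_fromRows, fromCols_mul_fromBlocks, fromCols_mul_fromRows]
  have hA : g.closedLoopA (g.K1 0) (g.K2 0 + L) = g.AL L := by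
    rw [closedLoopA, AL, Matrix.mul_add, ← add_assoc]
  have hC : g.closedLoopC (g.K1 0) (g.K2 0 + L) = g.CL L := by
    ext1 l
    rw [closedLoopC, CL, Matrix.mul_add, ← add_assoc]
  rw [hamiltonian, hA, hC, hcost]

lemma hamiltonian_sub_hamiltonian (Y' : Matrix (Fin n) (Fin n) ℝ)
    (F1 : Matrix (Fin m1) (Fin n) ℝ) (F2 : Matrix (Fin m2) (Fin n) ℝ) :
    g.hamiltonian Y F1 F2 - g.hamiltonian Y' F1 F2
      = lyapOp (g.closedLoopA F1 F2) (g.closedLoopC F1 F2) (Y - Y') := by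
  rw [hamiltonian, hamiltonian, lyapOp_sub, add_sub_add_right_eq_sub]

lemma closedLoopA_K (P : Matrix (Fin n) (Fin n) ℝ) :
    g.closedLoopA (g.K1 P) (g.K2 P) = g.AK P := rfl

lemma closedLoopC_K (P : Matrix (Fin n) (Fin n) ℝ) :
    g.closedLoopC (g.K1 P) (g.K2 P) = g.CK P := rfl

lemma hamiltonian_eq_quadratic₂ (hY : Y.IsSymm) (F1 : Matrix (Fin m1) (Fin n) ℝ)
    (F2 : Matrix (Fin m2) (Fin n) ℝ) :
    g.hamiltonian Y F1 F2 = g.hamiltonian Y F1 0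
      + F2ᵀ * (g.S2P Y + g.R21P Y * F1) + (g.S2P Y + g.R21P Y * F1)ᵀ * F2
      + F2ᵀ * g.R22P Y * F2 := by
  simp only [g.hamiltonian_eq_blocks hY, g.R21P_eq_transpose hY, transpose_zero, Matrix.zero_mul,
    Matrix.mul_zero, add_zero, transpose_add, transpose_mul, transpose_transpose,
    Matrix.mul_add, Matrix.add_mul, Matrix.mul_assoc]
  abel

lemma hamiltonian_eq_quadratic₁ (hY : Y.IsSymm) (F1 : Matrix (Fin m1) (Fin n) ℝ)
    (F2 : Matrix (Fin m2) (Fin n) ℝ) :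
    g.hamiltonian Y F1 F2 = g.hamiltonian Y 0 F2
      + F1ᵀ * (g.S1P Y + g.R12P Y * F2) + (g.S1P Y + g.R12P Y * F2)ᵀ * F1
      + F1ᵀ * g.R11P Y * F1 := by
  simp only [g.hamiltonian_eq_blocks hY, g.R21P_eq_transpose hY, transpose_zero, Matrix.zero_mul,
    Matrix.mul_zero, add_zero, transpose_add, transpose_mul, Matrix.mul_add, Matrix.add_mul,
    Matrix.mul_assoc]
  abel

lemma N2_eq {P : Matrix (Fin n) (Fin n) ℝ} (hu : IsUnit (g.RP P).det)
    (Z : Matrix (Fin n) (Fin n) ℝ) :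
    g.N2 P Z = g.S2P (P + Z) + g.R21P (P + Z) * g.K1 P + g.R22P (P + Z) * g.K2 P := by
  have hS2 : g.S2 = -(g.B2ᵀ * P + ∑ l, (g.D2 l)ᵀ * P * g.C l)
      - (g.R21P P * g.K1 P + g.R22P P * g.K2 P) := by
    have h := g.S2P_eq_neg hu
    rw [S2P] at h
    rw [sub_eq_add_neg, ← h]
    abel
  simp only [N2, CK, S2P, R21P, R22P, hS2, Matrix.add_mul, Matrix.mul_add, Matrix.sum_mul,
    Finset.sum_add_distrib, Matrix.mul_assoc]
  abel

lemma S1L_eq (hu0 : IsUnit (g.RP 0).det) (L : Matrix (Fin m2) (Fin n) ℝ)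
    (Y : Matrix (Fin n) (Fin n) ℝ) :
    g.S1L L Y = g.S1P Y + g.R12P Y * (g.K2 0 + L) + g.R11P Y * g.K1 0 := by
  have hS1 : g.S1 = -(g.R11 * g.K1 0 + g.R12 * g.K2 0) := by
    have h := g.S1P_eq_neg hu0
    simpa only [S1P, R11P, R12P, Matrix.mul_zero, Matrix.zero_mul, Finset.sum_const_zero,
      zero_add, add_zero] using h
  simp only [S1L, CL, SL, S1P, R11P, R12P, hS1, Matrix.add_mul, Matrix.mul_add, Matrix.sum_mul,
    Finset.sum_add_distrib, Matrix.mul_assoc]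
  abel

/-- The inner Riccati equation says that completing the square in `F2` leaves no remainder: at
`F2 = K2(P)` the centre of the square is `R22(P + Z)⁻¹ N2(P, Z)`. -/
lemma posSemidef_hamiltonian_of_innerRiccati {P Z : Matrix (Fin n) (Fin n) ℝ} (hP : P.IsSymm)
    (hZ : Z.IsSymm) (hu : IsUnit (g.RP P).det) (hdomPZ : g.MemDomG (P + Z))
    (hinner : g.InnerRiccati P Z) (F2 : Matrix (Fin m2) (Fin n) ℝ) :
    (g.hamiltonian (P + Z) (g.K1 P) F2).PosSemidef := by
  have hPZ : (P + Z).IsSymm := hP.add hZ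
  have hu2 : IsUnit (g.R22P (P + Z)).det := (isUnit_iff_isUnit_det _).mp hdomPZ.1.isUnit
  have hsq := quadratic_eq_sq_of_eq_at (g.R22P_isSymm hPZ) hu2
    (g.hamiltonian_eq_quadratic₂ hPZ (g.K1 P)) (F₀ := g.K2 P) ?_ F2
  · exact hsq ▸ hdomPZ.1.posSemidef.transpose_mul_mul_same _
  rw [InnerRiccati, sub_eq_zero] at hinner
  rw [← g.N2_eq hu, ← hinner,
    sub_eq_iff_eq_add'.mp (g.hamiltonian_sub_hamiltonian (Y := P + Z) P (g.K1 P) (g.K2 P)),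
    add_sub_cancel_left, g.hamiltonian_K hP hu]
  simp only [lyapOp, closedLoopA_K, closedLoopC_K, add_assoc]

/-- The Riccati equation of `L` says that completing the square in `F1` leaves no remainder: at
`F1 = K1(0)` the Hamiltonian is that of the system `(A_L, C_{lL}, Q_L)` defining `𝒜`, and the
centre of the square is `R11(P̃)⁻¹ S_{1L}(P̃)`. -/
lemma posSemidef_neg_hamiltonian_of_isStabSolL (hu0 : IsUnit (g.RP 0).det)
    {L : Matrix (Fin m2) (Fin n) ℝ} {Pt : Matrix (Fin n) (Fin n) ℝ} (hPt : g.IsStabSolL L Pt)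
    (F1 : Matrix (Fin m1) (Fin n) ℝ) :
    (-g.hamiltonian Pt F1 (g.K2 0 + L)).PosSemidef := by
  obtain ⟨hPts, hare, hR11, -⟩ := hPt
  have hu1 : IsUnit (g.R11P Pt).det :=
    (isUnit_iff_isUnit_det _).mp (by simpa using hR11.isUnit.neg)
  have hsq := quadratic_eq_sq_of_eq_at (g.R11P_isSymm hPts) hu1
    (g.hamiltonian_eq_quadratic₁ hPts · (g.K2 0 + L)) (F₀ := g.K1 0) ?_ F1
  · rw [hsq, ← Matrix.neg_mul, ← Matrix.mul_neg]
    exact hR11.posSemidef.transpose_mul_mul_same _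
  rw [← g.S1L_eq hu0, g.hamiltonian_K0_L hu0, ← sub_eq_zero]
  exact hare

end GameData

theorem statement10_general {n m1 m2 r : ℕ} (g : GameData n m1 m2 r)
    (hdom0 : g.MemDomG 0)
    (L : Matrix (Fin m2) (Fin n) ℝ)
    (Ptilde : Matrix (Fin n) (Fin n) ℝ) (hPtilde : g.IsStabSolL L Ptilde)
    (P Z : Matrix (Fin n) (Fin n) ℝ) (hP : P.IsSymm) (hZ : Z.IsSymm)
    (hdomP : g.MemDomG P) (hdomPZ : g.MemDomG (P + Z))
    (hinner : g.InnerRiccati P Z)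
    (hstable : MSStable
      (g.A + g.B1 * g.K1 P + g.B2 * g.K2 0 + g.B2 * L)
      (fun l => g.C l + g.D1 l * g.K1 P + g.D2 l * g.K2 0 + g.D2 l * L)) :
    (Ptilde - (P + Z)).PosSemidef := by
  have hu0 : IsUnit (g.RP 0).det := g.isUnit_det_RP (by simp [IsSymm]) hdom0
  have huP : IsUnit (g.RP P).det := g.isUnit_det_RP hP hdomP
  have hclosed : MSStable (g.closedLoopA (g.K1 P) (g.K2 0 + L))
      (g.closedLoopC (g.K1 P) (g.K2 0 + L)) := by
    convert hstable using 2 with l <;>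
      simp only [GameData.closedLoopA, GameData.closedLoopC, Matrix.mul_add, add_assoc]
  have hmin := g.posSemidef_hamiltonian_of_innerRiccati hP hZ huP hdomPZ hinner (g.K2 0 + L)
  have hmax := g.posSemidef_neg_hamiltonian_of_isStabSolL hu0 hPtilde (g.K1 P)
  refine posSemidef_of_msStable hclosed (isHermitian_iff_isSymm.2 (hPtilde.1.sub (hP.add hZ))) ?_
  rw [← g.hamiltonian_sub_hamiltonian, neg_sub, sub_eq_add_neg]
  exact hmin.add hmax

/-- Lemma, part (i): under the stated hypotheses, if the closed-loop
system formed with `K_1(P)` and `K_2(0) + L` is mean-square stable, then `P̃_L ⪰ P + Z`. -/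
theorem statement10 {n m1 m2 r : ℕ} (g : GameData n m1 m2 r)
    (hdom0 : g.MemDomG 0)
    (L : Matrix (Fin m2) (Fin n) ℝ) (hL : g.MemA L)
    (Ptilde : Matrix (Fin n) (Fin n) ℝ) (hPtilde : g.IsStabSolL L Ptilde)
    (P Z : Matrix (Fin n) (Fin n) ℝ) (hP : P.IsSymm) (hZ : Z.IsSymm)
    (hdomP : g.MemDomG P) (hdomPZ : g.MemDomG (P + Z))
    (hinner : g.InnerRiccati P Z)
    (hstable : MSStable
      (g.A + g.B1 * g.K1 P + g.B2 * g.K2 0 + g.B2 * L)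
      (fun l => g.C l + g.D1 l * g.K1 P + g.D2 l * g.K2 0 + g.D2 l * L)) :
    (Ptilde - (P + Z)).PosSemidef :=
  statement10_general g hdom0 L Ptilde hPtilde P Z hP hZ hdomP hdomPZ hinner hstable
end
end
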